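/- arXiv:math/0608736 — 4 statements merged into one kernel-verified Lean document; each statement's English description precedes it below -/
import Mathlib

section
/- Let S be a control semigroup and let X and Y be metric spaces. Equip X × Y with the max metric d((x,y),(x',y')) = max(d_X(x,x'), d_Y(y,y')). Then asdim_S (X × Y) ≤ asdim_S X + asdim_S Y. -/
/-!
Cover `X` and `Y` at a large scale `s` by `n + 1` and `m + 1` families and turn each family into a
Lipschitz bump function equal to `1` on it. The tail sums of the bumps on `X` subdivide an interval
`[0, a]`, those on `Y` an interval `[0, b]`, and the lengths of the overlaps of the two subdivisions
are Lipschitz functions `ψ i j` on `X × Y` with total sum `min a b ≥ 1`. The pairs `(i, j)` with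
`ψ i j > 0` form a chain (the staircase triangulation of a product of simplices), so at most
`n + m + 1` of them are positive at any point.

Such a Lipschitz partition of multiplicity `N` gives a cover by `N` families: at each point pick a
set `F` of indices whose values exceed all other values by a fixed gap, and colour the point by
`#F`. Two points of the same colour with different sets `F` are far apart, since some pair of the
Lipschitz functions has to swap its order by the whole gap between them. Within a set `F` the cover
is refined by the thickened product members indexed by one element of `F`.
-/

open Filter Set Metric Topology
open scoped NNReal ENNReal

/-- A large-scale (asymptotic) dim-control function: continuous, increasing,
eventually at least the identity, tending to infinity. -/
def IsLSControl (f : ℝ≥0 → ℝ≥0) : Prop :=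
  Continuous f ∧ Monotone f ∧ (∀ᶠ x in atTop, x ≤ f x) ∧ Tendsto f atTop atTop

/-- Asymptotically linear: coincides with a linear function on a neighborhood of infinity. -/
def IsAsympLinear (f : ℝ≥0 → ℝ≥0) : Prop :=
  ∃ a b : ℝ≥0, ∀ᶠ x in atTop, f x = a * x + b

/-- A (large-scale) control semigroup. -/
def IsControlSemigroup (S : Set (ℝ≥0 → ℝ≥0)) : Prop :=
  (∀ f ∈ S, IsLSControl f) ∧
  (∀ f, IsLSControl f → IsAsympLinear f → f ∈ S) ∧
  (∀ f ∈ S, ∀ g ∈ S, f ∘ g ∈ S)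

/-- A family of subsets is `s`-disjoint if distinct members are at distance `> s`. -/
def SDisjoint {X : Type*} [MetricSpace X] (s : ℝ≥0) (𝒰 : Set (Set X)) : Prop :=
  ∀ U ∈ 𝒰, ∀ V ∈ 𝒰, U ≠ V → ∀ x ∈ U, ∀ y ∈ V, (s : ℝ) < dist x y

/-- A family of subsets is `D`-bounded if each member has diameter at most `D`. -/
def BoundedBy {X : Type*} [MetricSpace X] (D : ℝ≥0) (𝒰 : Set (Set X)) : Prop :=
  ∀ U ∈ 𝒰, EMetric.diam U ≤ (D : ℝ≥0∞)

/-- `asdim_S X ≤ n`. -/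
def ASDimLE (S : Set (ℝ≥0 → ℝ≥0)) (X : Type*) [MetricSpace X] (n : ℕ) : Prop :=
  ∃ f ∈ S, ∃ s₀ : ℝ≥0, ∀ s : ℝ≥0, s₀ ≤ s →
    ∃ 𝒰 : Fin (n + 1) → Set (Set X),
      (⋃ i, ⋃₀ 𝒰 i) = univ ∧ ∀ i, SDisjoint s (𝒰 i) ∧ BoundedBy (f s) (𝒰 i)

/-- The `S`-controlled asymptotic dimension, as an element of `ℕ∞`. -/
noncomputable def ASDim (S : Set (ℝ≥0 → ℝ≥0)) (X : Type*) [MetricSpace X] : ℕ∞ :=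
  sInf {k : ℕ∞ | ∃ n : ℕ, k = n ∧ ASDimLE S X n}

/-- `S₁ ⪯ S₂` : `S₂` is finer than `S₁`. -/
def Preceq (S₁ S₂ : Set (ℝ≥0 → ℝ≥0)) : Prop :=
  ∀ f ∈ S₂, ∃ g ∈ S₁, ∀ᶠ x in atTop, f x ≤ g x
section Staircase

open Finset

variable {a b : ℕ → ℝ}

/-- The length of `[a (i + 1), a i] ∩ [b (j + 1), b j]`. -/
def intervalOverlap (a b : ℕ → ℝ) (i j : ℕ) : ℝ :=
  max 0 (min (a i) (b j) - max (a (i + 1)) (b (j + 1)))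

-- inclusion–exclusion for the intervals `[A, B]` and `[C, D]`
lemma max_zero_min_sub_max {A B C D : ℝ} (hAB : A ≤ B) (hCD : C ≤ D) :
    max 0 (min B D - max A C) = min B D - min A D - (min B C - min A C) := by
  simp only [min_def, max_def]
  split_ifs <;> linarith

lemma intervalOverlap_pos_iff {i j : ℕ} :
    0 < intervalOverlap a b i j ↔
      (a (i + 1) < a i ∧ a (i + 1) < b j) ∧ b (j + 1) < a i ∧ b (j + 1) < b j := by
  simp [intervalOverlap]

lemma sum_intervalOverlap (ha : Antitone a) (hb : Antitone b) {n m : ℕ} (hn : a n = 0)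
    (hm : b m = 0) :
    ∑ i ∈ range n, ∑ j ∈ range m, intervalOverlap a b i j = min (a 0) (b 0) := by
  set g : ℕ → ℕ → ℝ := fun i j => min (a i) (b j)
  have hg : ∀ i j, intervalOverlap a b i j =
      (g i j - g (i + 1) j) - (g i (j + 1) - g (i + 1) (j + 1)) :=
    fun i j => max_zero_min_sub_max (ha i.le_succ) (hb j.le_succ)
  have ha0 : 0 ≤ a 0 := hn ▸ ha (Nat.zero_le n)
  have hb0 : 0 ≤ b 0 := hm ▸ hb (Nat.zero_le m)
  calc ∑ i ∈ range n, ∑ j ∈ range m, intervalOverlap a b i j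
      = ∑ i ∈ range n, ((g i 0 - g (i + 1) 0) - (g i m - g (i + 1) m)) := by
        refine sum_congr rfl fun i _ => ?_
        rw [← sum_range_sub' (fun j => g i j - g (i + 1) j)]
        exact sum_congr rfl fun j _ => hg i j
    _ = (g 0 0 - g n 0) - (g 0 m - g n m) := by
        rw [sum_sub_distrib, sum_range_sub' (g · 0), sum_range_sub' (g · m)]
    _ = min (a 0) (b 0) := by simp [g, hn, hm, ha0, hb0]

lemma le_of_intervalOverlap_pos (ha : Antitone a) (hb : Antitone b) {i j i' j' : ℕ} (hi : i < i')
    (h : 0 < intervalOverlap a b i j) (h' : 0 < intervalOverlap a b i' j') : j ≤ j' := by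
  by_contra! hj
  rw [intervalOverlap_pos_iff] at h h'
  linarith [ha (Nat.succ_le_of_lt hi), hb (Nat.succ_le_of_lt hj)]

lemma card_intervalOverlap_pos_le (ha : Antitone a) (hb : Antitone b) (n m : ℕ) :
    #{ij : Fin (n + 1) × Fin (m + 1) | 0 < intervalOverlap a b ij.1 ij.2} ≤ n + m + 1 := by
  -- the cells met by the staircase form a chain, so `i + j` is injective on them
  calc _ ≤ #(range (n + m + 1)) := by
        refine card_le_card_of_injOn (fun ij => (ij.1 : ℕ) + ij.2) (fun ij _ => ?_) ?_
        · simp only [coe_range, Set.mem_Iio]; omega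
        · rintro ⟨i, j⟩ hij ⟨i', j'⟩ hij' hsum
          simp only [coe_filter, Finset.mem_univ, true_and, Set.mem_ofPred_eq] at hij hij' hsum
          rcases lt_trichotomy (i : ℕ) i' with hi | hi | hi
          · have := le_of_intervalOverlap_pos ha hb hi hij hij'; omega
          · ext <;> simp <;> omega
          · have := le_of_intervalOverlap_pos ha hb hi hij' hij; omega
    _ = n + m + 1 := card_range _

lemma LipschitzWith.intervalOverlap {Z : Type*} [PseudoEMetricSpace Z] {a b : Z → ℕ → ℝ}
    {K : ℝ≥0} (ha : ∀ k, LipschitzWith K (a · k)) (hb : ∀ k, LipschitzWith K (b · k)) (i j : ℕ) :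
    LipschitzWith (2 * K) fun z => intervalOverlap (a z) (b z) i j := by
  simpa [two_mul, _root_.intervalOverlap] using
    (((ha i).min (hb j)).sub ((ha (i + 1)).max (hb (j + 1)))).const_max 0

end Staircase

lemma LipschitzWith.finset_sum {ι Z : Type*} [PseudoEMetricSpace Z] {s : Finset ι}
    {f : ι → Z → ℝ} {K : ℝ≥0} (hf : ∀ i ∈ s, LipschitzWith K (f i)) :
    LipschitzWith (s.card * K) fun z => ∑ i ∈ s, f i z := by
  classical
  induction s using Finset.induction_on with
  | empty => simp
  | insert a s ha ih =>
    simp_rw [Finset.sum_insert ha, Finset.card_insert_of_notMem ha, Nat.cast_succ, add_one_mul,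
      add_comm _ K]
    exact (hf a (s.mem_insert_self a)).add (ih fun i hi => hf i (Finset.mem_insert_of_mem hi))

section TailSum

open Finset

variable {n : ℕ}

def tailSum (d : Fin n → ℝ) (k : ℕ) : ℝ :=
  ∑ l ∈ univ.filter fun l : Fin n => k ≤ l, d l

lemma tailSum_antitone {d : Fin n → ℝ} (hd : 0 ≤ d) : Antitone (tailSum d) := by
  intro k k' hk
  refine sum_le_sum_of_subset_of_nonneg (fun l => ?_) fun l _ _ => hd l
  simp only [mem_filter, Finset.mem_univ, true_and]
  omega

lemma tailSum_self (d : Fin n → ℝ) : tailSum d n = 0 :=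
  sum_eq_zero fun l hl => by simp at hl; omega

lemma le_tailSum_zero {d : Fin n → ℝ} (hd : 0 ≤ d) (l : Fin n) : d l ≤ tailSum d 0 :=
  single_le_sum (fun l _ => hd l) (by simp)

lemma tailSum_eq_add_tailSum_succ (d : Fin n → ℝ) (l : Fin n) :
    tailSum d l = d l + tailSum d (l + 1) := by
  rw [tailSum, tailSum, sum_filter, sum_filter, ← Fintype.sum_ite_eq' l d, ← sum_add_distrib]
  refine sum_congr rfl fun k _ => ?_
  split_ifs <;> first | omega | simp_all

lemma LipschitzWith.tailSum {Z : Type*} [PseudoEMetricSpace Z] {d : Z → Fin n → ℝ} {K : ℝ≥0}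
    (hd : ∀ l, LipschitzWith K (d · l)) (k : ℕ) :
    LipschitzWith (n * K) fun z => tailSum (d z) k := by
  refine (LipschitzWith.finset_sum fun l _ => hd l).weaken ?_
  gcongr
  exact_mod_cast (card_filter_le _ _).trans (by simp)

end TailSum

lemma exists_mem_thickening_of_thickenedIndicator_pos {X : Type*} [PseudoEMetricSpace X] {δ : ℝ}
    (hδ : 0 < δ) {𝒰 : Set (Set X)} {x : X} (h : 0 < thickenedIndicator hδ (⋃₀ 𝒰) x) :
    ∃ U ∈ 𝒰, x ∈ thickening δ U := by
  by_contra! h'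
  refine h.ne' (thickenedIndicator_zero hδ _ ?_)
  simpa [sUnion_eq_biUnion, thickening_biUnion] using h'

lemma exists_staircase {X : Type*} [PseudoMetricSpace X] {n : ℕ} {r : ℝ} (hr : 0 < r)
    {𝒰 : Fin n → Set (Set X)} (h𝒰 : ⋃ i, ⋃₀ 𝒰 i = univ) :
    ∃ a : X → ℕ → ℝ, (∀ x, Antitone (a x)) ∧ (∀ x, a x n = 0) ∧ (∀ x, 1 ≤ a x 0) ∧
      (∀ k, LipschitzWith (n * r.toNNReal⁻¹) (a · k)) ∧
      ∀ x (l : Fin n), a x (l + 1) < a x l → ∃ U ∈ 𝒰 l, x ∈ thickening r U := by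
  set d : X → Fin n → ℝ := fun x l => thickenedIndicator hr (⋃₀ 𝒰 l) x
  have hd : ∀ x, 0 ≤ d x := fun x l => NNReal.coe_nonneg _
  refine ⟨fun x => tailSum (d x), fun x => tailSum_antitone (hd x), fun x => tailSum_self _,
    fun x => ?_, LipschitzWith.tailSum fun l => ?_, fun x l hl => ?_⟩
  · obtain ⟨l, hl⟩ := mem_iUnion.1 (h𝒰 ▸ mem_univ x)
    calc (1 : ℝ) = d x l := by simp only [d, thickenedIndicator_one hr _ hl, NNReal.coe_one]
      _ ≤ tailSum (d x) 0 := le_tailSum_zero (hd x) l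
  · refine LipschitzWith.of_dist_le_mul fun x y => ?_
    have := (lipschitzWith_thickenedIndicator hr (⋃₀ 𝒰 l)).dist_le_mul x y
    rwa [NNReal.dist_eq, ← Real.dist_eq] at this
  · dsimp only at hl
    rw [tailSum_eq_add_tailSum_succ] at hl
    exact exists_mem_thickening_of_thickenedIndicator_pos hr (NNReal.coe_pos.1 (by linarith))

section Families

variable {X Y : Type*} [MetricSpace X] [MetricSpace Y]

def IsColoredCover {n : ℕ} (s D : ℝ≥0) (𝒰 : Fin (n + 1) → Set (Set X)) : Prop :=
  ⋃ i, ⋃₀ 𝒰 i = univ ∧ ∀ i, SDisjoint s (𝒰 i) ∧ BoundedBy D (𝒰 i)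

lemma BoundedBy.mono {D D' : ℝ≥0} {𝒰 : Set (Set X)} (h : BoundedBy D 𝒰) (hD : D ≤ D') :
    BoundedBy D' 𝒰 :=
  fun U hU => (h U hU).trans (by exact_mod_cast hD)

lemma IsColoredCover.mono {n : ℕ} {s D D' : ℝ≥0} {𝒰 : Fin (n + 1) → Set (Set X)}
    (h : IsColoredCover s D 𝒰) (hD : D ≤ D') : IsColoredCover s D' 𝒰 :=
  ⟨h.1, fun i => ⟨(h.2 i).1, (h.2 i).2.mono hD⟩⟩

lemma SDisjoint.image_thickening {s t r : ℝ≥0} {𝒰 : Set (Set X)} (h : SDisjoint s 𝒰)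
    (hst : t + 2 * r ≤ s) : SDisjoint t (thickening r '' 𝒰) := by
  rintro _ ⟨U, hU, rfl⟩ _ ⟨V, hV, rfl⟩ hne x hx y hy
  obtain ⟨u, hu, hxu⟩ := mem_thickening_iff.1 hx
  obtain ⟨v, hv, hyv⟩ := mem_thickening_iff.1 hy
  have huv := h U hU V hV (fun hUV => hne (by rw [hUV])) u hu v hv
  have := dist_triangle4 u x y v
  have hst' : (t : ℝ) + 2 * r ≤ s := by exact_mod_cast hst
  rw [dist_comm] at hxu
  linarith

lemma BoundedBy.image_thickening {D r : ℝ≥0} {𝒰 : Set (Set X)} (h : BoundedBy D 𝒰) :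
    BoundedBy (D + 2 * r) (thickening r '' 𝒰) := by
  rintro _ ⟨U, hU, rfl⟩
  calc ediam (thickening r U) ≤ ediam U + 2 * r := ediam_thickening_le r
    _ ≤ D + 2 * r := by gcongr; exact h U hU
    _ = ((D + 2 * r : ℝ≥0) : ℝ≥0∞) := by push_cast; rfl

lemma SDisjoint.image2_prod {s : ℝ≥0} {𝒰 : Set (Set X)} {𝒱 : Set (Set Y)} (h𝒰 : SDisjoint s 𝒰)
    (h𝒱 : SDisjoint s 𝒱) : SDisjoint s (image2 (· ×ˢ ·) 𝒰 𝒱) := by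
  rintro _ ⟨U, hU, V, hV, rfl⟩ _ ⟨U', hU', V', hV', rfl⟩ hne p ⟨hp₁, hp₂⟩ q ⟨hq₁, hq₂⟩
  rw [Prod.dist_eq, lt_max_iff]
  by_cases hUU' : U = U'
  · subst hUU'
    exact .inr (h𝒱 V hV V' hV' (fun h => hne (by rw [h])) _ hp₂ _ hq₂)
  · exact .inl (h𝒰 U hU U' hU' hUU' _ hp₁ _ hq₁)

lemma BoundedBy.image2_prod {D : ℝ≥0} {𝒰 : Set (Set X)} {𝒱 : Set (Set Y)} (h𝒰 : BoundedBy D 𝒰)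
    (h𝒱 : BoundedBy D 𝒱) : BoundedBy D (image2 (· ×ˢ ·) 𝒰 𝒱) := by
  rintro _ ⟨U, hU, V, hV, rfl⟩
  refine ediam_le fun p hp q hq => ?_
  rw [Prod.edist_eq]
  exact max_le ((edist_le_ediam_of_mem hp.1 hq.1).trans (h𝒰 U hU))
    ((edist_le_ediam_of_mem hp.2 hq.2).trans (h𝒱 V hV))

end Families

section Cells

variable {Z K : Type*} {A : Set Z} {key : Z → K} {𝒲 : K → Set (Set Z)}

def cellFamily (A : Set Z) (key : Z → K) (𝒲 : K → Set (Set Z)) : Set (Set Z) :=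
  {P | ∃ κ, ∃ W ∈ 𝒲 κ, P = W ∩ {z ∈ A | key z = κ}}

lemma mem_sUnion_cellFamily {z : Z} (hzA : z ∈ A) (hz : z ∈ ⋃₀ 𝒲 (key z)) :
    z ∈ ⋃₀ cellFamily A key 𝒲 := by
  obtain ⟨W, hW, hzW⟩ := hz
  exact ⟨_, ⟨key z, W, hW, rfl⟩, hzW, hzA, rfl⟩

variable [MetricSpace Z]

lemma SDisjoint.cellFamily {t : ℝ≥0} (h𝒲 : ∀ κ, SDisjoint t (𝒲 κ))
    (hkey : ∀ z ∈ A, ∀ w ∈ A, key z ≠ key w → (t : ℝ) < dist z w) :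
    SDisjoint t (cellFamily A key 𝒲) := by
  rintro _ ⟨κ, W, hW, rfl⟩ _ ⟨κ', W', hW', rfl⟩ hne z ⟨hzW, hzA, rfl⟩ w ⟨hwW, hwA, rfl⟩
  by_cases hk : key z = key w
  · rw [hk] at hW hne
    exact h𝒲 _ W hW W' hW' (by rintro rfl; exact hne rfl) z hzW w hwW
  · exact hkey z hzA w hwA hk

lemma BoundedBy.cellFamily {D : ℝ≥0} (h𝒲 : ∀ κ, BoundedBy D (𝒲 κ)) :
    BoundedBy D (cellFamily A key 𝒲) := by
  rintro _ ⟨κ, W, hW, rfl⟩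
  exact (ediam_mono inter_subset_left).trans (h𝒲 κ W hW)

end Cells

lemma Finset.exists_succ_eq_of_antitone {ι : Type*} {A : ℕ → Finset ι} (hA : Antitone A) {N : ℕ}
    (hN : (A N).Nonempty) (h0 : (A 0).card ≤ N) : ∃ k < N, A (k + 1) = A k := by
  by_contra! h
  have hcard : ∀ k ≤ N, (A k).card + k ≤ (A 0).card := by
    intro k hk
    induction k with
    | zero => simp
    | succ k ih =>
      have := Finset.card_lt_card ((hA (by omega : k ≤ k + 1)).ssubset_of_ne (h k (by omega)))
      have := ih (by omega)
      omega
  have := hcard N le_rfl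
  have := hN.card_pos
  omega

section GapSets

variable {ι : Type*}

def IsGapSet (φ : ι → ℝ) (ε : ℝ) (F : Finset ι) : Prop :=
  ∀ i ∈ F, ∀ j ∉ F, φ j + ε ≤ φ i

lemma exists_isGapSet [Fintype ι] {φ : ι → ℝ} {N : ℕ} (hN : (Finset.univ.filter (0 < φ ·)).card ≤ N)
    {δ : ℝ} (hδ : 0 < δ) {i₀ : ι} (hi₀ : δ ≤ φ i₀) :
    ∃ F : Finset ι, F.Nonempty ∧ (∀ i ∈ F, 0 < φ i) ∧ IsGapSet φ (δ / (N + 1)) F := by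
  classical
  set ε := δ / (N + 1)
  have hε : 0 < ε := by positivity
  -- the `N + 1` level sets `{k ε < φ}` cannot all differ, so no value lies in some `(k ε, (k+1) ε]`
  set A : ℕ → Finset ι := fun k => Finset.univ.filter (k * ε < φ ·)
  have hA : Antitone A := fun k k' hk i hi => by
    simp only [A, Finset.mem_filter, Finset.mem_univ, true_and] at hi ⊢
    have : (k : ℝ) * ε ≤ k' * ε := by gcongr
    linarith
  have hAN : i₀ ∈ A N := by
    simp only [A, Finset.mem_filter, Finset.mem_univ, true_and]
    calc N * ε < (N + 1) * ε := by linarith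
      _ = δ := by simp only [ε]; field_simp
      _ ≤ φ i₀ := hi₀
  obtain ⟨k, hk, hAk⟩ := Finset.exists_succ_eq_of_antitone hA ⟨i₀, hAN⟩ (by simpa [A] using hN)
  refine ⟨A k, ⟨i₀, hA hk.le hAN⟩, fun i hi => ?_, fun i hi j hj => ?_⟩
  · simp only [A, Finset.mem_filter, Finset.mem_univ, true_and] at hi
    exact lt_of_le_of_lt (by positivity) hi
  · rw [← hAk] at hi
    simp only [A, Finset.mem_filter, Finset.mem_univ, true_and, not_lt] at hi hj
    push_cast at hi
    linarith

lemma IsGapSet.le_mul_dist {Z : Type*} [PseudoMetricSpace Z] {φ : ι → Z → ℝ} {L : ℝ≥0}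
    (hφ : ∀ i, LipschitzWith L (φ i)) {ε : ℝ} {z w : Z} {F G : Finset ι}
    (hF : IsGapSet (φ · z) ε F) (hG : IsGapSet (φ · w) ε G) (hcard : F.card = G.card)
    (hne : F ≠ G) : ε ≤ L * dist z w := by
  obtain ⟨i, hiF, hiG⟩ : ∃ i ∈ F, i ∉ G :=
    Finset.not_subset.1 fun h => hne (Finset.eq_of_subset_of_card_le h hcard.ge)
  obtain ⟨j, hjG, hjF⟩ : ∃ j ∈ G, j ∉ F :=
    Finset.not_subset.1 fun h => hne (Finset.eq_of_subset_of_card_le h hcard.le).symm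
  have hi := (hφ i).dist_le_mul z w
  have hj := (hφ j).dist_le_mul z w
  rw [Real.dist_eq, abs_le] at hi hj
  linarith [hF i hiF j hjF, hG j hjG i hiG]

end GapSets

theorem exists_isColoredCover_of_lipschitz {Z ι : Type*} [MetricSpace Z] [Fintype ι] {N : ℕ}
    {t D L : ℝ≥0} {δ : ℝ} {ψ : ι → Z → ℝ} (hψ : ∀ i, LipschitzWith L (ψ i)) (hδ : 0 < δ)
    (hbig : ∀ z, ∃ i, δ ≤ ψ i z) (hmult : ∀ z, (Finset.univ.filter (0 < ψ · z)).card ≤ N + 1)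
    {𝒲 : ι → Set (Set Z)} (h𝒲 : ∀ i, SDisjoint t (𝒲 i) ∧ BoundedBy D (𝒲 i))
    (hpos : ∀ z i, 0 < ψ i z → z ∈ ⋃₀ 𝒲 i) (hLt : L * t < δ / (N + 2)) :
    ∃ 𝒞 : Fin (N + 1) → Set (Set Z), IsColoredCover t D 𝒞 := by
  classical
  choose F hFne hFpos hFgap using fun z =>
    (hbig z).elim fun _ hi => exists_isGapSet (hmult z) hδ hi
  have hFcard : ∀ z, (F z).card - 1 < N + 1 := fun z => by
    have := Finset.card_le_card fun i hi => Finset.mem_filter.2 ⟨Finset.mem_univ i, hFpos z i hi⟩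
    have := (hFne z).card_pos
    have := hmult z
    omega
  set 𝒲' : Finset ι → Set (Set Z) := fun κ => if h : κ.Nonempty then 𝒲 h.choose else ∅
  have h𝒲' : ∀ κ, SDisjoint t (𝒲' κ) ∧ BoundedBy D (𝒲' κ) := fun κ => by
    by_cases h : κ.Nonempty
    · simpa [𝒲', h] using h𝒲 h.choose
    · simp [𝒲', h, SDisjoint, BoundedBy]
  refine ⟨fun k => cellFamily {z | (F z).card = k + 1} F 𝒲', ?_, fun k => ⟨?_, ?_⟩⟩
  · refine eq_univ_of_forall fun z => mem_iUnion.2 ⟨⟨_, hFcard z⟩, mem_sUnion_cellFamily ?_ ?_⟩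
    · have := (hFne z).card_pos
      simp only [mem_ofPred_eq]
      omega
    · simpa [𝒲', hFne z] using hpos z _ (hFpos z _ (hFne z).choose_spec)
  · refine SDisjoint.cellFamily (fun κ => (h𝒲' κ).1) fun z hz w hw hne => ?_
    have hgap := (hFgap z).le_mul_dist hψ (hFgap w) (hz.trans hw.symm) hne
    have hN : ((N + 1 : ℕ) : ℝ) + 1 = N + 2 := by push_cast; ring
    rw [hN] at hgap
    by_contra! h
    have := mul_le_mul_of_nonneg_left h L.coe_nonneg
    linarith
  · exact BoundedBy.cellFamily fun κ => (h𝒲' κ).2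

theorem exists_lipschitz_partition_prod {X Y : Type*} [MetricSpace X] [MetricSpace Y] {n m : ℕ}
    {r : ℝ} (hr : 0 < r) {𝒰 : Fin (n + 1) → Set (Set X)} {𝒱 : Fin (m + 1) → Set (Set Y)}
    (h𝒰 : ⋃ i, ⋃₀ 𝒰 i = univ) (h𝒱 : ⋃ j, ⋃₀ 𝒱 j = univ) :
    ∃ ψ : Fin (n + 1) × Fin (m + 1) → X × Y → ℝ,
      (∀ ij, LipschitzWith (2 * ((n + m + 2 : ℕ) * r.toNNReal⁻¹)) (ψ ij)) ∧
      (∀ p, ∃ ij, 1 / ((n + 1) * (m + 1)) ≤ ψ ij p) ∧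
      (∀ p, (Finset.univ.filter (0 < ψ · p)).card ≤ n + m + 1) ∧
      ∀ p ij, 0 < ψ ij p →
        p ∈ ⋃₀ image2 (· ×ˢ ·) (thickening r '' 𝒰 ij.1) (thickening r '' 𝒱 ij.2) := by
  obtain ⟨a, ha, ha_last, ha_one, ha_lip, ha_pos⟩ := exists_staircase hr h𝒰
  obtain ⟨b, hb, hb_last, hb_one, hb_lip, hb_pos⟩ := exists_staircase hr h𝒱
  refine ⟨fun ij p => intervalOverlap (a p.1) (b p.2) ij.1 ij.2, fun ij => ?_, fun p => ?_,
    fun p => card_intervalOverlap_pos_le (ha p.1) (hb p.2) n m, fun p ij hp => ?_⟩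
  · have hK : ∀ k ≤ n + m + 2, (k : ℝ≥0) * r.toNNReal⁻¹ * 1 ≤ (n + m + 2 : ℕ) * r.toNNReal⁻¹ :=
      fun k hk => by rw [mul_one]; gcongr
    exact LipschitzWith.intervalOverlap
      (fun k => ((ha_lip k).comp LipschitzWith.prod_fst).weaken (hK _ (by omega)))
      (fun k => ((hb_lip k).comp LipschitzWith.prod_snd).weaken (hK _ (by omega))) _ _
  · have hsum : ∑ ij : Fin (n + 1) × Fin (m + 1), intervalOverlap (a p.1) (b p.2) ij.1 ij.2
        = min (a p.1 0) (b p.2 0) := by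
      rw [Fintype.sum_prod_type, Fin.sum_univ_eq_sum_range
        (fun i => ∑ j : Fin (m + 1), intervalOverlap (a p.1) (b p.2) i j),
        ← sum_intervalOverlap (ha p.1) (hb p.2) (ha_last p.1) (hb_last p.2)]
      exact Finset.sum_congr rfl fun i _ => Fin.sum_univ_eq_sum_range (intervalOverlap _ _ i) _
    obtain ⟨ij, -, hij⟩ := Finset.exists_le_of_sum_le Finset.univ_nonempty
      (f := fun _ => 1 / ((n + 1) * (m + 1) : ℝ)) (s := Finset.univ) <| by
        rw [hsum, Finset.sum_const, Finset.card_univ, Fintype.card_prod, Fintype.card_fin,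
          Fintype.card_fin, nsmul_eq_mul]
        push_cast
        rw [mul_one_div_cancel (by positivity)]
        exact le_min (ha_one p.1) (hb_one p.2)
    exact ⟨ij, hij⟩
  · rw [intervalOverlap_pos_iff] at hp
    obtain ⟨U, hU, hxU⟩ := ha_pos p.1 ij.1 hp.1.1
    obtain ⟨V, hV, hyV⟩ := hb_pos p.2 ij.2 hp.2.2
    exact ⟨_, mem_image2_of_mem (mem_image_of_mem _ hU) (mem_image_of_mem _ hV), hxU, hyV⟩

theorem IsColoredCover.prod {X Y : Type*} [MetricSpace X] [MetricSpace Y] {n m : ℕ}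
    {s t r D : ℝ≥0} {𝒰 : Fin (n + 1) → Set (Set X)} {𝒱 : Fin (m + 1) → Set (Set Y)}
    (h𝒰 : IsColoredCover s D 𝒰) (h𝒱 : IsColoredCover s D 𝒱) (hts : t + 2 * r ≤ s)
    (htr : 2 * ((n + 1) * (m + 1) * (n + m + 2) ^ 2) * t < r) :
    ∃ 𝒲 : Fin (n + m + 1) → Set (Set (X × Y)), IsColoredCover t (D + 2 * r) 𝒲 := by
  have hr : (0 : ℝ) < r := by exact_mod_cast zero_le.trans_lt htr
  obtain ⟨ψ, hψlip, hψbig, hψmult, hψpos⟩ := exists_lipschitz_partition_prod hr h𝒰.1 h𝒱.1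
  refine exists_isColoredCover_of_lipschitz hψlip (by positivity) hψbig hψmult
    (fun ij => ⟨((h𝒰.2 _).1.image_thickening hts).image2_prod ((h𝒱.2 _).1.image_thickening hts),
      (h𝒰.2 _).2.image_thickening.image2_prod (h𝒱.2 _).2.image_thickening⟩) hψpos ?_
  have htr' : 2 * ((n + 1) * (m + 1) * (n + m + 2) ^ 2) * (t : ℝ) < r := by exact_mod_cast htr
  simp only [Real.toNNReal_coe]
  push_cast
  rw [div_div, lt_div_iff₀ (by positivity)]
  field_simp
  linarith

section ControlledDimension

variable {S : Set (ℝ≥0 → ℝ≥0)} {X Y : Type*} [MetricSpace X] [MetricSpace Y] {n m : ℕ}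

lemma IsControlSemigroup.const_mul_mem (hS : IsControlSemigroup S) {c : ℝ≥0} (hc : 1 ≤ c) :
    (c * ·) ∈ S := by
  have hle : ∀ x, x ≤ c * x := fun x => le_mul_of_one_le_left zero_le hc
  exact hS.2.1 _
    ⟨continuous_const.mul continuous_id, fun a b hab => mul_le_mul_of_nonneg_left hab zero_le,
      .of_forall hle, tendsto_atTop_mono hle tendsto_id⟩
    ⟨c, 0, .of_forall fun x => (add_zero _).symm⟩

lemma asdimLE_iff : ASDimLE S X n ↔
    ∃ f ∈ S, ∀ᶠ s in atTop, ∃ 𝒰 : Fin (n + 1) → Set (Set X), IsColoredCover s (f s) 𝒰 := by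
  simp only [ASDimLE, IsColoredCover, eventually_atTop]

theorem ASDimLE.prod (hS : IsControlSemigroup S) (hX : ASDimLE S X n) (hY : ASDimLE S Y m) :
    ASDimLE S (X × Y) (n + m) := by
  rw [asdimLE_iff] at hX hY ⊢
  obtain ⟨f, hf, hf_cover⟩ := hX
  obtain ⟨g, hg, hg_cover⟩ := hY
  obtain ⟨-, hf_mono, hf_ge, -⟩ := hS.1 f hf
  obtain ⟨-, -, hg_ge, hg_top⟩ := hS.1 g hg
  set c : ℝ≥0 := (n + 1) * (m + 1) * (n + m + 2) ^ 2
  have hc : (1 : ℝ) ≤ c := by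
    simp only [c]; push_cast
    nlinarith [mul_nonneg (n.cast_nonneg : (0 : ℝ) ≤ n) (m.cast_nonneg : (0 : ℝ) ≤ m)]
  have h16c : 1 ≤ 16 * c := by rw [← NNReal.coe_le_coe]; push_cast; linarith
  have hscale : Tendsto (16 * c * ·) atTop atTop :=
    tendsto_atTop_mono (fun t => le_mul_of_one_le_left zero_le h16c) tendsto_id
  refine ⟨fun t => 2 * f (g (16 * c * t)), hS.2.2 _ (hS.const_mul_mem one_le_two) _
    (hS.2.2 _ hf _ (hS.2.2 _ hg _ (hS.const_mul_mem h16c))), ?_⟩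
  filter_upwards [hscale.eventually hf_cover, hscale.eventually hg_cover, hscale.eventually hg_ge,
    (hg_top.comp hscale).eventually hf_ge, eventually_gt_atTop 0]
    with t ⟨𝒰, h𝒰⟩ ⟨𝒱, h𝒱⟩ hgt hfgt ht
  set s := 16 * c * t with hs
  have hct : (0 : ℝ) < c * t := by positivity
  have hrs : 2 * (4 * c * t) ≤ s := by rw [hs, ← NNReal.coe_le_coe]; push_cast; nlinarith
  have hts : t + 2 * (4 * c * t) ≤ s := by rw [hs, ← NNReal.coe_le_coe]; push_cast; nlinarith
  have htr : 2 * c * t < 4 * c * t := by rw [← NNReal.coe_lt_coe]; push_cast; nlinarith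
  obtain ⟨𝒲, h𝒲⟩ := (h𝒰.mono le_sup_left).prod (h𝒱.mono le_sup_right) hts htr
  refine ⟨𝒲, h𝒲.mono ?_⟩
  calc f s ⊔ g s + 2 * (4 * c * t) ≤ f (g s) + f (g s) :=
        add_le_add (sup_le (hf_mono hgt) hfgt) (hrs.trans (hgt.trans hfgt))
    _ = 2 * f (g s) := (two_mul _).symm

lemma ASDimLE.asdim_le (h : ASDimLE S X n) : ASDim S X ≤ n :=
  sInf_le ⟨n, rfl, h⟩

lemma exists_asdimLE_of_asdim_ne_top (h : ASDim S X ≠ ⊤) :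
    ∃ n : ℕ, ASDim S X = n ∧ ASDimLE S X n := by
  have hne : {k : ℕ∞ | ∃ n : ℕ, k = n ∧ ASDimLE S X n}.Nonempty :=
    Set.nonempty_iff_ne_empty.2 fun he => h (by rw [ASDim, he, sInf_empty])
  exact csInf_mem hne

end ControlledDimension

/-- The product `X × Y` carries the max metric (Mathlib's product metric):
`dist (x,y) (x',y') = max (dist x x') (dist y y')`. -/
theorem asdim_prod_le (S : Set (ℝ≥0 → ℝ≥0)) (hS : IsControlSemigroup S)
    (X Y : Type*) [MetricSpace X] [MetricSpace Y] :
    ASDim S (X × Y) ≤ ASDim S X + ASDim S Y := by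
  rcases eq_or_ne (ASDim S X) ⊤ with hX | hX
  · simp [hX]
  rcases eq_or_ne (ASDim S Y) ⊤ with hY | hY
  · simp [hY]
  obtain ⟨n, hn, hXn⟩ := exists_asdimLE_of_asdim_ne_top hX
  obtain ⟨m, hm, hYm⟩ := exists_asdimLE_of_asdim_ne_top hY
  rw [hn, hm, ← Nat.cast_add]
  exact (hXn.prod hS hYm).asdim_le
end

section
/- For every small-scale control semigroup ξ and every control semigroup S, the linked set Link(ξ, S) is a global control semigroup, i.e. every member of Link(ξ, S) is a global dim-control function, Link(ξ, S) contains every global dim-control function that coincides with a linear function on a neighborhood of 0 and with a linear function on a neighborhood of ∞, and Link(ξ, S) is closed under composition. -/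
open Filter Set Metric Topology
open scoped NNReal ENNReal

/-- A small-scale dim-control function. -/
def IsSSControl (f : ℝ≥0 → ℝ≥0) : Prop :=
  Continuous f ∧ Monotone f ∧ f 0 = 0 ∧ ∀ᶠ x in 𝓝[>] (0 : ℝ≥0), x ≤ f x

/-- Coincides with a linear function on a neighborhood of `0`. -/
def IsLinearNearZero (f : ℝ≥0 → ℝ≥0) : Prop :=
  ∃ a b : ℝ≥0, ∀ᶠ x in 𝓝 (0 : ℝ≥0), f x = a * x + b

/-- A small-scale control semigroup. -/
def IsSSControlSemigroup (ξ : Set (ℝ≥0 → ℝ≥0)) : Prop :=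
  (∀ f ∈ ξ, IsSSControl f) ∧
  (∀ f, IsSSControl f → IsLinearNearZero f → f ∈ ξ) ∧
  (∀ f ∈ ξ, ∀ g ∈ ξ, f ∘ g ∈ ξ)

/-- A global dim-control function. -/
def IsGlobalControl (f : ℝ≥0 → ℝ≥0) : Prop :=
  Continuous f ∧ Monotone f ∧ f 0 = 0 ∧ Tendsto f atTop atTop ∧
    (∀ᶠ x in 𝓝[>] (0 : ℝ≥0), x ≤ f x) ∧ (∀ᶠ x in atTop, x ≤ f x)

/-- A global control semigroup. -/
def IsGlobalControlSemigroup (S : Set (ℝ≥0 → ℝ≥0)) : Prop :=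
  (∀ f ∈ S, IsGlobalControl f) ∧
  (∀ f, IsGlobalControl f → IsLinearNearZero f → IsAsympLinear f → f ∈ S) ∧
  (∀ f ∈ S, ∀ g ∈ S, f ∘ g ∈ S)

/-- `smdim_ξ X ≤ n`. -/
def SMDimLE (ξ : Set (ℝ≥0 → ℝ≥0)) (X : Type*) [MetricSpace X] (n : ℕ) : Prop :=
  ∃ f ∈ ξ, ∃ s₀ : ℝ≥0, 0 < s₀ ∧ ∀ s : ℝ≥0, 0 < s → s ≤ s₀ →
    ∃ 𝒰 : Fin (n + 1) → Set (Set X),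
      (⋃ i, ⋃₀ 𝒰 i) = univ ∧ ∀ i, SDisjoint s (𝒰 i) ∧ BoundedBy (f s) (𝒰 i)

/-- The `ξ`-controlled small-scale dimension. -/
noncomputable def SMDim (ξ : Set (ℝ≥0 → ℝ≥0)) (X : Type*) [MetricSpace X] : ℕ∞ :=
  sInf {k : ℕ∞ | ∃ n : ℕ, k = n ∧ SMDimLE ξ X n}

/-- `dim_S̄ X ≤ n` (global dimension). -/
def GDimLE (S : Set (ℝ≥0 → ℝ≥0)) (X : Type*) [MetricSpace X] (n : ℕ) : Prop :=
  ∃ f ∈ S, ∀ s : ℝ≥0, 0 < s →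
    ∃ 𝒰 : Fin (n + 1) → Set (Set X),
      (⋃ i, ⋃₀ 𝒰 i) = univ ∧ ∀ i, SDisjoint s (𝒰 i) ∧ BoundedBy (f s) (𝒰 i)

/-- The `S̄`-controlled global dimension. -/
noncomputable def GDim (S : Set (ℝ≥0 → ℝ≥0)) (X : Type*) [MetricSpace X] : ℕ∞ :=
  sInf {k : ℕ∞ | ∃ n : ℕ, k = n ∧ GDimLE S X n}

/-- Large-scale truncation `Trunc^{**}(S̄)`. -/
def TruncInf (S : Set (ℝ≥0 → ℝ≥0)) : Set (ℝ≥0 → ℝ≥0) :=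
  {g | IsLSControl g ∧ ∃ f ∈ S, ∀ᶠ x in atTop, g x = f x}

/-- Small-scale truncation `Trunc_{**}(S̄)`. -/
def TruncZero (S : Set (ℝ≥0 → ℝ≥0)) : Set (ℝ≥0 → ℝ≥0) :=
  {g | IsSSControl g ∧ ∃ f ∈ S, ∀ᶠ x in 𝓝 (0 : ℝ≥0), g x = f x}

/-- The linked set `Link(ξ, S)`. -/
def Link (ξ S : Set (ℝ≥0 → ℝ≥0)) : Set (ℝ≥0 → ℝ≥0) :=
  {g | Continuous g ∧ Monotone g ∧
    ∃ g₁ ∈ ξ, ∃ g₂ ∈ S, (∀ᶠ x in 𝓝 (0 : ℝ≥0), g x = g₁ x) ∧ (∀ᶠ x in atTop, g x = g₂ x)}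


lemma link_mem_global (ξ S : Set (ℝ≥0 → ℝ≥0))
    (hξ : IsSSControlSemigroup ξ) (hS : IsControlSemigroup S)
    {g : ℝ≥0 → ℝ≥0} (hg : g ∈ Link ξ S) : IsGlobalControl g := by
  obtain ⟨hc, hm, g₁, hg₁, g₂, hg₂, h0, hinf⟩ := hg
  obtain ⟨hc₁, hm₁, hz₁, hs₁⟩ := hξ.1 g₁ hg₁
  obtain ⟨hc₂, hm₂, hs₂, ht₂⟩ := hS.1 g₂ hg₂
  refine ⟨hc, hm, ?_, ?_, ?_, ?_⟩
  · rw [h0.self_of_nhds, hz₁]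
  · exact ht₂.congr' (Filter.EventuallyEq.symm hinf)
  · filter_upwards [nhdsWithin_le_nhds h0, hs₁] with x h1 h2
    rw [h1]; exact h2
  · filter_upwards [hinf, hs₂] with x h1 h2
    rw [h1]; exact h2

/-- The linked set of a small-scale control semigroup and a (large-scale) control
semigroup is a global control semigroup. -/
theorem link_isGlobalControlSemigroup (ξ S : Set (ℝ≥0 → ℝ≥0))
    (hξ : IsSSControlSemigroup ξ) (hS : IsControlSemigroup S) :
    IsGlobalControlSemigroup (Link ξ S) := by
  refine ⟨fun g hg => link_mem_global ξ S hξ hS hg, ?_, ?_⟩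
  · rintro f ⟨hc, hm, hz, ht, hss, hls⟩ ⟨a, b, hab⟩ ⟨c, d, hcd⟩
    refine ⟨hc, hm, fun x => a * x + b, ?_, fun x => c * x + d, ?_, hab, hcd⟩
    · refine hξ.2.1 _ ⟨?_, ?_, ?_, ?_⟩ ⟨a, b, Filter.Eventually.of_forall fun x => rfl⟩
      · exact (continuous_const.mul continuous_id).add continuous_const
      · exact fun x y h => add_le_add (mul_le_mul_right h a) le_rfl
      · have := hab.self_of_nhds
        rw [hz] at this
        simp at this
        simp [← this]
      · filter_upwards [hss, nhdsWithin_le_nhds hab] with x h1 h2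
        rw [← h2]; exact h1
    · refine hS.2.1 _ ⟨?_, ?_, ?_, ?_⟩ ⟨c, d, Filter.Eventually.of_forall fun x => rfl⟩
      · exact (continuous_const.mul continuous_id).add continuous_const
      · exact fun x y h => add_le_add (mul_le_mul_right h c) le_rfl
      · filter_upwards [hls, hcd] with x h1 h2
        rw [← h2]; exact h1
      · exact ht.congr' hcd
  · rintro f hf g hg
    obtain ⟨hfc, hfm, f₁, hf₁, f₂, hf₂, hf0, hfinf⟩ := hf
    obtain ⟨hgc, hgm, g₁, hg₁, g₂, hg₂, hg0, hginf⟩ := hg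
    have hgg := link_mem_global ξ S hξ hS ⟨hgc, hgm, g₁, hg₁, g₂, hg₂, hg0, hginf⟩
    have hgz : g 0 = 0 := hgg.2.2.1
    have htz : Tendsto g (𝓝 0) (𝓝 0) := by
      have := hgc.tendsto 0
      rwa [hgz] at this
    have htt : Tendsto g atTop atTop := hgg.2.2.2.1
    refine ⟨hfc.comp hgc, hfm.comp hgm, f₁ ∘ g₁, hξ.2.2 f₁ hf₁ g₁ hg₁,
      f₂ ∘ g₂, hS.2.2 f₂ hf₂ g₂ hg₂, ?_, ?_⟩
    · filter_upwards [hg0, htz.eventually hf0] with x h1 h2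
      simp only [Function.comp_apply]
      rw [h2, h1]
    · filter_upwards [hginf, htt.eventually hfinf] with x h1 h2
      simp only [Function.comp_apply]
      rw [h2, h1]
end

section
/- Let S̄ be a global control semigroup. Then Link(Trunc_{**}(S̄), Trunc^{**}(S̄)) is equivalent to S̄: for every g in Link(Trunc_{**}(S̄), Trunc^{**}(S̄)) there is f ∈ S̄ with g(x) ≤ f(x) for all x ≥ 0, and conversely for every f ∈ S̄ there is g in Link(Trunc_{**}(S̄), Trunc^{**}(S̄)) with f(x) ≤ g(x) for all x ≥ 0. Moreover, for any small-scale control semigroup ξ and any control semigroup S, Trunc^{**}(Link(ξ,S)) is equivalent to S (mutual domination on neighborhoods of ∞) and Trunc_{**}(Link(ξ,S)) is equivalent to ξ (mutual domination on neighborhoods of 0). -/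
open Filter Set Metric Topology
open scoped NNReal ENNReal

lemma IsLSControl.congr {f g : ℝ≥0 → ℝ≥0} (hf : IsLSControl f) (hgc : Continuous g)
    (hgm : Monotone g) (h : g =ᶠ[atTop] f) : IsLSControl g :=
  let ⟨_, _, hfid, hft⟩ := hf
  ⟨hgc, hgm, (h.and hfid).mono fun _ ⟨he, hx⟩ => he ▸ hx, hft.congr' h.symm⟩

lemma IsSSControl.congr {f g : ℝ≥0 → ℝ≥0} (hf : IsSSControl f) (hgc : Continuous g)
    (hgm : Monotone g) (h : g =ᶠ[𝓝 0] f) : IsSSControl g :=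
  let ⟨_, _, hf0, hfid⟩ := hf
  ⟨hgc, hgm, h.eq_of_nhds.trans hf0,
    ((h.filter_mono nhdsWithin_le_nhds).and hfid).mono fun _ ⟨he, hx⟩ => he ▸ hx⟩

lemma IsGlobalControl.isLSControl {f : ℝ≥0 → ℝ≥0} (hf : IsGlobalControl f) : IsLSControl f :=
  let ⟨hc, hm, _, ht, _, hid⟩ := hf
  ⟨hc, hm, hid, ht⟩

lemma IsGlobalControl.isSSControl {f : ℝ≥0 → ℝ≥0} (hf : IsGlobalControl f) : IsSSControl f :=
  let ⟨hc, hm, h0, _, hid, _⟩ := hf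
  ⟨hc, hm, h0, hid⟩

lemma IsGlobalControl.pos {f : ℝ≥0 → ℝ≥0} (hf : IsGlobalControl f) {x : ℝ≥0} (hx : 0 < x) :
    0 < f x := by
  obtain ⟨-, hfm, -, -, hid, -⟩ := hf
  obtain ⟨y, hyf, hy⟩ := (hid.and (Ioo_mem_nhdsGT hx)).exists
  exact hy.1.trans_le (hyf.trans (hfm hy.2.le))

lemma mem_truncInf_of_mem {A : Set (ℝ≥0 → ℝ≥0)} {f : ℝ≥0 → ℝ≥0} (hf : f ∈ A)
    (h : IsLSControl f) : f ∈ TruncInf A :=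
  ⟨h, f, hf, EventuallyEq.rfl⟩

lemma mem_truncZero_of_mem {A : Set (ℝ≥0 → ℝ≥0)} {f : ℝ≥0 → ℝ≥0} (hf : f ∈ A)
    (h : IsSSControl f) : f ∈ TruncZero A :=
  ⟨h, f, hf, EventuallyEq.rfl⟩

lemma mem_link_truncZero_truncInf {A : Set (ℝ≥0 → ℝ≥0)} {f : ℝ≥0 → ℝ≥0} (hf : f ∈ A)
    (h : IsGlobalControl f) : f ∈ Link (TruncZero A) (TruncInf A) :=
  ⟨h.1, h.2.1, f, mem_truncZero_of_mem hf h.isSSControl, f, mem_truncInf_of_mem hf h.isLSControl,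
    EventuallyEq.rfl, EventuallyEq.rfl⟩

lemma IsSSControlSemigroup.const_mul_mem {ξ : Set (ℝ≥0 → ℝ≥0)} (hξ : IsSSControlSemigroup ξ)
    {a : ℝ≥0} (ha : 1 ≤ a) : (a * ·) ∈ ξ :=
  hξ.2.1 _ ⟨continuous_const.mul continuous_id, fun _ _ h => mul_le_mul_right h a, mul_zero a,
    .of_forall fun _ => le_mul_of_one_le_left zero_le ha⟩
    ⟨a, 0, .of_forall fun _ => (add_zero _).symm⟩

lemma IsControlSemigroup.add_const_mem {S : Set (ℝ≥0 → ℝ≥0)} (hS : IsControlSemigroup S)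
    (b : ℝ≥0) : (· + b) ∈ S :=
  hS.2.1 _ ⟨continuous_id.add continuous_const, fun _ _ h => add_le_add_left h b,
    .of_forall fun _ => le_self_add, tendsto_atTop_mono (fun _ => le_self_add) tendsto_id⟩
    ⟨1, b, .of_forall fun _ => by rw [one_mul]⟩

section Ramp

def ramp (K B : ℝ≥0) (y : ℝ≥0) : ℝ≥0 := y + min (K * y) B

variable {K B : ℝ≥0}

lemma le_ramp (y : ℝ≥0) : y ≤ ramp K B y := le_self_add

lemma le_ramp_of_le_mul {y : ℝ≥0} (h : B ≤ K * y) : B ≤ ramp K B y := by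
  rw [ramp, min_eq_right h]
  exact le_add_self

lemma isGlobalControl_ramp : IsGlobalControl (ramp K B) :=
  ⟨continuous_id.add ((continuous_const.mul continuous_id).min continuous_const),
    fun _ _ h => add_le_add h (min_le_min_right B (mul_le_mul_right h K)), by simp [ramp],
    tendsto_atTop_mono le_ramp tendsto_id, .of_forall le_ramp, .of_forall le_ramp⟩

lemma isLinearNearZero_ramp (hB : 0 < B) : IsLinearNearZero (ramp K B) := by
  have hsmall : ∀ᶠ y in 𝓝 (0 : ℝ≥0), K * y < B :=
    (continuous_const.mul continuous_id).tendsto' 0 0 (mul_zero K) |>.eventually (gt_mem_nhds hB)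
  refine ⟨1 + K, 0, hsmall.mono fun y hy => ?_⟩
  rw [ramp, min_eq_left hy.le]
  ring

lemma isAsympLinear_ramp (hK : 0 < K) : IsAsympLinear (ramp K B) := by
  have hlarge : ∀ᶠ y in atTop, B ≤ K * y :=
    (tendsto_id.const_mul_atTop hK).eventually_ge_atTop B
  refine ⟨1, B, hlarge.mono fun y hy => ?_⟩
  rw [ramp, min_eq_right hy, one_mul]

lemma IsGlobalControlSemigroup.ramp_mem {Sb : Set (ℝ≥0 → ℝ≥0)}
    (hSb : IsGlobalControlSemigroup Sb) (hK : 0 < K) (hB : 0 < B) : ramp K B ∈ Sb :=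
  hSb.2.1 _ isGlobalControl_ramp (isLinearNearZero_ramp hB) (isAsympLinear_ramp hK)

end Ramp

/-- A global control function `f` lies above the identity except on some `[δ, M)`; a ramp that
jumps past `M` (and past the level where `f ≥ C`) before `min δ m` repairs the gap. -/
lemma IsGlobalControlSemigroup.exists_ramp_mem {Sb : Set (ℝ≥0 → ℝ≥0)}
    (hSb : IsGlobalControlSemigroup Sb) {f : ℝ≥0 → ℝ≥0} (hf : IsGlobalControl f) (C : ℝ≥0)
    {m : ℝ≥0} (hm : 0 < m) :
    ∃ r ∈ Sb, (∀ y, y ≤ r y) ∧ (∀ y, y ≤ f (r y)) ∧ ∀ y, m ≤ y → C ≤ f (r y) := by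
  obtain ⟨-, hfm, -, hft, hf0, hfinf⟩ := hf
  obtain ⟨δ, hδ, hδf⟩ := (nhdsGT_basis (0 : ℝ≥0)).eventually_iff.mp hf0
  obtain ⟨M, hM⟩ := eventually_atTop.mp hfinf
  obtain ⟨N, hN⟩ := eventually_atTop.mp (hft.eventually_ge_atTop C)
  set B := max (max M N) 1
  set d := min δ m
  have hB : 0 < B := zero_lt_one.trans_le (le_max_right _ _)
  have hd : 0 < d := lt_min hδ hm
  have hbig : ∀ y, d ≤ y → B ≤ ramp (B / d) B y := fun y hy =>
    le_ramp_of_le_mul <| (div_mul_cancel₀ B hd.ne').symm.le.trans (mul_le_mul_right hy _)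
  refine ⟨ramp (B / d) B, hSb.ramp_mem (div_pos hB hd) hB, le_ramp, fun y => ?_, fun y hy => ?_⟩
  · rcases lt_or_ge y δ with hyδ | hδy
    · rcases eq_zero_or_pos y with rfl | hy0
      · exact zero_le
      · exact (hδf ⟨hy0, hyδ⟩).trans (hfm (le_ramp y))
    · have hMB : M ≤ B := (le_max_left _ _).trans (le_max_left _ _)
      exact (le_ramp y).trans (hM _ (hMB.trans (hbig y ((min_le_left _ _).trans hδy))))
  · have hNB : N ≤ B := (le_max_right _ _).trans (le_max_left _ _)
    exact hN _ (hNB.trans (hbig y ((min_le_right _ _).trans hy)))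

/-- Near `0` the composite is `f₂ ∘ r ∘ f₁ ≥ f₁`, near `∞` it is `≥ f₂` since `f₁, r ≥ id` there,
and in between the ramp lifts it above the constant bound `g M`. -/
lemma IsGlobalControlSemigroup.exists_mem_ge_of_mem_link {Sb : Set (ℝ≥0 → ℝ≥0)}
    (hSb : IsGlobalControlSemigroup Sb) {g : ℝ≥0 → ℝ≥0}
    (hg : g ∈ Link (TruncZero Sb) (TruncInf Sb)) : ∃ f ∈ Sb, ∀ x, g x ≤ f x := by
  obtain ⟨-, hgm, g₁, ⟨-, f₁, hf₁, hg₁⟩, g₂, ⟨-, f₂, hf₂, hg₂⟩, hgg₁, hgg₂⟩ := hg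
  have hf₁' := hSb.1 f₁ hf₁
  have hf₂' := hSb.1 f₂ hf₂
  have ⟨_, hf₁m, _, _, _, hf₁id⟩ := hf₁'
  obtain ⟨ε, hε, hεf₁⟩ := NNReal.nhds_zero_basis.eventually_iff.mp (EventuallyEq.trans hgg₁ hg₁)
  obtain ⟨M, hM⟩ := eventually_atTop.mp ((EventuallyEq.trans hgg₂ hg₂).and hf₁id)
  obtain ⟨r, hr, hidr, hf₂r, hCr⟩ := hSb.exists_ramp_mem hf₂' (g M) (hf₁'.pos hε)
  refine ⟨f₂ ∘ r ∘ f₁, hSb.2.2 _ hf₂ _ (hSb.2.2 _ hr _ hf₁), fun x => ?_⟩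
  rcases lt_or_ge x ε with hxε | hεx
  · rw [hεf₁ hxε]
    exact hf₂r _
  rcases le_or_gt M x with hMx | hxM
  · obtain ⟨hgx, hxf₁⟩ := hM x hMx
    rw [hgx]
    exact hf₂'.2.1 (hxf₁.trans (hidr _))
  · exact (hgm hxM.le).trans (hCr _ (hf₁m hεx))

section Glue

def glue (T : ℝ≥0) (f₁ f₂ : ℝ≥0 → ℝ≥0) (x : ℝ≥0) : ℝ≥0 :=
  f₁ (min x T) + (f₂ (max x T) - f₂ T)

variable {T : ℝ≥0} {f₁ f₂ : ℝ≥0 → ℝ≥0}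

lemma glue_of_le {x : ℝ≥0} (hx : x ≤ T) : glue T f₁ f₂ x = f₁ x := by
  simp [glue, min_eq_left hx, max_eq_right hx]

lemma glue_of_ge (hf₂ : Monotone f₂) (hT : f₁ T = f₂ T) {x : ℝ≥0} (hx : T ≤ x) :
    glue T f₁ f₂ x = f₂ x := by
  rw [glue, min_eq_right hx, max_eq_left hx, hT, add_tsub_cancel_of_le (hf₂ hx)]

lemma continuous_glue (hf₁ : Continuous f₁) (hf₂ : Continuous f₂) : Continuous (glue T f₁ f₂) :=
  (hf₁.comp (continuous_id.min continuous_const)).add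
    ((hf₂.comp (continuous_id.max continuous_const)).sub continuous_const)

lemma monotone_glue (hf₁ : Monotone f₁) (hf₂ : Monotone f₂) : Monotone (glue T f₁ f₂) :=
  fun _ _ h => add_le_add (hf₁ (min_le_min_right T h))
    (tsub_le_tsub_right (hf₂ (max_le_max_right T h)) _)

lemma glue_eventuallyEq_nhds_zero (hT : 0 < T) : glue T f₁ f₂ =ᶠ[𝓝 0] f₁ :=
  eventually_of_mem (Iio_mem_nhds hT) fun _ hx => glue_of_le (le_of_lt hx)

lemma glue_eventuallyEq_atTop (hf₂ : Monotone f₂) (hT : f₁ T = f₂ T) :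
    glue T f₁ f₂ =ᶠ[atTop] f₂ :=
  eventually_atTop.mpr ⟨T, fun _ => glue_of_ge hf₂ hT⟩

lemma glue_mem_link {ξ S : Set (ℝ≥0 → ℝ≥0)} (h₁ξ : f₁ ∈ ξ) (h₂S : f₂ ∈ S)
    (hf₁c : Continuous f₁) (hf₁m : Monotone f₁) (hf₂c : Continuous f₂) (hf₂m : Monotone f₂)
    (hT₀ : 0 < T) (hT : f₁ T = f₂ T) : glue T f₁ f₂ ∈ Link ξ S :=
  ⟨continuous_glue hf₁c hf₂c, monotone_glue hf₁m hf₂m, f₁, h₁ξ, f₂, h₂S,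
    glue_eventuallyEq_nhds_zero hT₀, glue_eventuallyEq_atTop hf₂m hT⟩

end Glue

/-- Extend `f ∈ S` linearly to the left of a point `T` with `T ≤ f T`. -/
lemma IsControlSemigroup.exists_mem_truncInf_link {ξ S : Set (ℝ≥0 → ℝ≥0)}
    (hξ : IsSSControlSemigroup ξ) (hS : IsControlSemigroup S) {f : ℝ≥0 → ℝ≥0} (hf : f ∈ S) :
    ∃ g ∈ TruncInf (Link ξ S), g =ᶠ[atTop] f := by
  obtain ⟨hfc, hfm, hfid, -⟩ := hS.1 f hf
  obtain ⟨T, hTf, hT₀⟩ := (hfid.and (eventually_gt_atTop 0)).exists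
  have hslope : 1 ≤ f T / T := (one_le_div hT₀).mpr hTf
  have hT : f T / T * T = f T := div_mul_cancel₀ _ hT₀.ne'
  have hg := glue_mem_link (hξ.const_mul_mem hslope) hf (continuous_const.mul continuous_id)
    (fun _ _ h => mul_le_mul_right h _) hfc hfm hT₀ hT
  have hgf := glue_eventuallyEq_atTop hfm hT
  exact ⟨_, mem_truncInf_of_mem hg ((hS.1 f hf).congr hg.1 hg.2.1 hgf), hgf⟩

/-- Extend `f ∈ ξ` by a translate of the identity to the right of a point `t > 0` with `t ≤ f t`. -/
lemma IsSSControlSemigroup.exists_mem_truncZero_link {ξ S : Set (ℝ≥0 → ℝ≥0)}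
    (hξ : IsSSControlSemigroup ξ) (hS : IsControlSemigroup S) {f : ℝ≥0 → ℝ≥0} (hf : f ∈ ξ) :
    ∃ g ∈ TruncZero (Link ξ S), g =ᶠ[𝓝 0] f := by
  obtain ⟨hfc, hfm, -, hfid⟩ := hξ.1 f hf
  obtain ⟨t, htf, ht₀⟩ := (hfid.and self_mem_nhdsWithin).exists
  have ht : f t = t + (f t - t) := (add_tsub_cancel_of_le htf).symm
  have hg := glue_mem_link hf (hS.add_const_mem (f t - t)) hfc hfm
    (continuous_id.add continuous_const) (fun _ _ h => add_le_add_left h _) ht₀ ht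
  have hgf : glue t f (· + (f t - t)) =ᶠ[𝓝 0] f := glue_eventuallyEq_nhds_zero ht₀
  exact ⟨_, mem_truncZero_of_mem hg ((hξ.1 f hf).congr hg.1 hg.2.1 hgf), hgf⟩

/-- `Link(Trunc_{**}(S̄), Trunc^{**}(S̄)) ≈ S̄`, and conversely truncating a linked
semigroup recovers the pieces up to equivalence. -/
theorem link_trunc_equiv (Sb : Set (ℝ≥0 → ℝ≥0)) (hSb : IsGlobalControlSemigroup Sb)
    (ξ S : Set (ℝ≥0 → ℝ≥0)) (hξ : IsSSControlSemigroup ξ) (hS : IsControlSemigroup S) :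
    (∀ g ∈ Link (TruncZero Sb) (TruncInf Sb), ∃ f ∈ Sb, ∀ x : ℝ≥0, g x ≤ f x) ∧
    (∀ f ∈ Sb, ∃ g ∈ Link (TruncZero Sb) (TruncInf Sb), ∀ x : ℝ≥0, f x ≤ g x) ∧
    (∀ g ∈ TruncInf (Link ξ S), ∃ f ∈ S, ∀ᶠ x in atTop, g x ≤ f x) ∧
    (∀ f ∈ S, ∃ g ∈ TruncInf (Link ξ S), ∀ᶠ x in atTop, f x ≤ g x) ∧
    (∀ g ∈ TruncZero (Link ξ S), ∃ f ∈ ξ, ∀ᶠ x in 𝓝 (0 : ℝ≥0), g x ≤ f x) ∧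
    (∀ f ∈ ξ, ∃ g ∈ TruncZero (Link ξ S), ∀ᶠ x in 𝓝 (0 : ℝ≥0), f x ≤ g x) := by
  refine ⟨fun g hg => hSb.exists_mem_ge_of_mem_link hg,
    fun f hf => ⟨f, mem_link_truncZero_truncInf hf (hSb.1 f hf), fun _ => le_rfl⟩,
    ?_, fun f hf => ?_, ?_, fun f hf => ?_⟩
  · rintro g ⟨-, h, ⟨-, -, -, -, h₂, hh₂, -, hhh₂⟩, hgh⟩
    exact ⟨h₂, hh₂, (EventuallyEq.trans hgh hhh₂).le⟩
  · obtain ⟨g, hg, hgf⟩ := hS.exists_mem_truncInf_link hξ hf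
    exact ⟨g, hg, hgf.symm.le⟩
  · rintro g ⟨-, h, ⟨-, -, h₁, hh₁, -, -, hhh₁, -⟩, hgh⟩
    exact ⟨h₁, hh₁, (EventuallyEq.trans hgh hhh₁).le⟩
  · obtain ⟨g, hg, hgf⟩ := hξ.exists_mem_truncZero_link hS hf
    exact ⟨g, hg, hgf.symm.le⟩
end

section
/- Let (X,d) be a metric space and S̄ a global control semigroup. For c > 0 define the metric d'_c = min(d, c), and the metric d''_c by d''_c(x,y) = max(c, d(x,y)) for x ≠ y and d''_c(x,x) = 0. Then for every c > 0: dim_S̄ (X, d'_c) = dim_S̄ (X, d'_1) (= m-dim_S̄ X) and dim_S̄ (X, d''_c) = dim_S̄ (X, d''_1) (= M-dim_S̄ X). -/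
open Filter Set Metric Topology
open scoped NNReal ENNReal

/-- The distance function of an explicitly given metric space structure. -/
def MDist {X : Type*} (m : MetricSpace X) (x y : X) : ℝ :=
  @dist X m.toPseudoMetricSpace.toDist x y

/-!
The truncations of `d` at `c` and at `1` (from below, or from above) are within the constant
factors `max c 1` and `max c⁻¹ 1` of each other, so the identity map between them is
bi-Lipschitz. The controlled dimension is a bi-Lipschitz invariant: if `d₁ ≤ K d₂` and
`d₂ ≤ L d₁`, a cover that is `L s`-disjoint and `f (L s)`-bounded for `d₂` is `s`-disjoint and
`K f (L s)`-bounded for `d₁`, and `s ↦ K f (L s)` stays in `S̄` because linear maps of slope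
`≥ 1` are global control functions and `S̄` is closed under composition.
-/

lemma min_le_max_div_mul_min {D c c' : ℝ} (hD : 0 ≤ D) (hc' : 0 < c') :
    min D c ≤ max (c / c') 1 * min D c' := by
  rcases le_total D c' with h | h
  · rw [min_eq_left h]
    exact (min_le_left D c).trans (le_mul_of_one_le_left hD (le_max_right _ _))
  · rw [min_eq_right h]
    calc min D c ≤ c / c' * c' := by rw [div_mul_cancel₀ c hc'.ne']; exact min_le_right D c
      _ ≤ max (c / c') 1 * c' := by gcongr; exact le_max_left _ _

lemma max_le_max_div_mul_max {D c c' : ℝ} (hD : 0 ≤ D) (hc' : 0 < c') :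
    max c D ≤ max (c / c') 1 * max c' D := by
  have hmax : 0 ≤ max c' D := hD.trans (le_max_right _ _)
  apply max_le
  · calc c = c / c' * c' := (div_mul_cancel₀ c hc'.ne').symm
      _ ≤ max (c / c') 1 * max c' D := by gcongr <;> first | positivity | exact le_max_left _ _
  · exact (le_max_right c' D).trans (le_mul_of_one_le_left hmax (le_max_right _ _))

lemma IsGlobalControlSemigroup.const_mul_mem {S : Set (ℝ≥0 → ℝ≥0)}
    (hS : IsGlobalControlSemigroup S) {t : ℝ≥0} (ht : 1 ≤ t) : (t * ·) ∈ S := by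
  have hle : ∀ x : ℝ≥0, x ≤ t * x := fun x => le_mul_of_one_le_left zero_le ht
  have hlin : ∀ x : ℝ≥0, t * x = t * x + 0 := fun x => (add_zero _).symm
  refine hS.2.1 _ ⟨by fun_prop, fun _ _ h => mul_le_mul_right h t, mul_zero t,
    tendsto_atTop_mono hle tendsto_id, Eventually.of_forall hle, Eventually.of_forall hle⟩
    ⟨t, 0, .of_forall hlin⟩ ⟨t, 0, .of_forall hlin⟩

section BiLipschitz

variable {X : Type*} {m₁ m₂ : MetricSpace X}

lemma exists_one_le_mdist_le_mul {K : ℝ}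
    (h : ∀ x y : X, x ≠ y → MDist m₁ x y ≤ K * MDist m₂ x y) :
    ∃ K' : ℝ≥0, 1 ≤ K' ∧ ∀ x y : X, MDist m₁ x y ≤ K' * MDist m₂ x y := by
  refine ⟨(max K 1).toNNReal, Real.one_le_toNNReal.2 (le_max_right _ _), fun x y => ?_⟩
  rw [Real.coe_toNNReal _ (zero_le_one.trans (le_max_right _ _))]
  by_cases hxy : x = y
  · subst hxy
    simp only [MDist, @dist_self X m₁.toPseudoMetricSpace, @dist_self X m₂.toPseudoMetricSpace,
      mul_zero, le_refl]
  · exact (h x y hxy).trans <| mul_le_mul_of_nonneg_right (le_max_left K 1)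
      (@dist_nonneg X m₂.toPseudoMetricSpace x y)

lemma ediam_le_mul_ediam {K : ℝ≥0} (h : ∀ x y : X, MDist m₁ x y ≤ K * MDist m₂ x y)
    (U : Set X) :
    @Metric.ediam X m₁.toPseudoEMetricSpace U ≤ K * @Metric.ediam X m₂.toPseudoEMetricSpace U := by
  refine @Metric.ediam_le X U m₁.toPseudoEMetricSpace _ fun x hx y hy => ?_
  calc @edist X m₁.toEDist x y = ENNReal.ofReal (MDist m₁ x y) :=
        @edist_dist X m₁.toPseudoMetricSpace x y
    _ ≤ ENNReal.ofReal (K * MDist m₂ x y) := ENNReal.ofReal_le_ofReal (h x y)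
    _ = K * @edist X m₂.toEDist x y := by
        rw [ENNReal.ofReal_mul K.coe_nonneg, ENNReal.ofReal_coe_nnreal,
          @edist_dist X m₂.toPseudoMetricSpace x y]
        rfl
    _ ≤ K * @Metric.ediam X m₂.toPseudoEMetricSpace U :=
        mul_le_mul_right (@Metric.edist_le_ediam_of_mem X U x y m₂.toPseudoEMetricSpace hx hy) _

lemma GDimLE.of_mdist_le_mul {S : Set (ℝ≥0 → ℝ≥0)} (hS : IsGlobalControlSemigroup S)
    {K L : ℝ≥0} (hK : 1 ≤ K) (hL : 1 ≤ L)
    (h₁ : ∀ x y : X, MDist m₁ x y ≤ K * MDist m₂ x y)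
    (h₂ : ∀ x y : X, MDist m₂ x y ≤ L * MDist m₁ x y) {n : ℕ}
    (h : @GDimLE S X m₂ n) : @GDimLE S X m₁ n := by
  obtain ⟨f, hf, hcover⟩ := h
  have hL₀ : (0 : ℝ) < L := by exact_mod_cast zero_lt_one.trans_le hL
  refine ⟨(K * ·) ∘ f ∘ (L * ·),
    hS.2.2 _ (hS.const_mul_mem hK) _ (hS.2.2 f hf _ (hS.const_mul_mem hL)), fun s hs => ?_⟩
  obtain ⟨𝒰, h𝒰, hprop⟩ := hcover (L * s) (mul_pos (by exact_mod_cast hL₀) hs)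
  refine ⟨𝒰, h𝒰, fun i => ⟨fun U hU V hV hUV x hx y hy => ?_, fun U hU => ?_⟩⟩
  · have hdisj : (L : ℝ) * s < MDist m₂ x y := by
      exact_mod_cast (hprop i).1 U hU V hV hUV x hx y hy
    exact lt_of_mul_lt_mul_left (hdisj.trans_le (h₂ x y)) hL₀.le
  · calc @Metric.ediam X m₁.toPseudoEMetricSpace U
        ≤ K * @Metric.ediam X m₂.toPseudoEMetricSpace U := ediam_le_mul_ediam h₁ U
      _ ≤ K * f (L * s) := mul_le_mul_right ((hprop i).2 U hU) _
      _ = ((K * f (L * s) : ℝ≥0) : ℝ≥0∞) := (ENNReal.coe_mul _ _).symm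

theorem gdim_eq_of_mdist_le_mul {S : Set (ℝ≥0 → ℝ≥0)} (hS : IsGlobalControlSemigroup S)
    {K L : ℝ} (h₁ : ∀ x y : X, x ≠ y → MDist m₁ x y ≤ K * MDist m₂ x y)
    (h₂ : ∀ x y : X, x ≠ y → MDist m₂ x y ≤ L * MDist m₁ x y) :
    @GDim S X m₁ = @GDim S X m₂ := by
  obtain ⟨K', hK', h₁'⟩ := exists_one_le_mdist_le_mul h₁
  obtain ⟨L', hL', h₂'⟩ := exists_one_le_mdist_le_mul h₂
  unfold GDim
  congr 1
  ext k
  refine exists_congr fun n => and_congr_right fun _ => ⟨?_, ?_⟩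
  · exact GDimLE.of_mdist_le_mul hS hL' hK' h₂' h₁'
  · exact GDimLE.of_mdist_le_mul hS hK' hL' h₁' h₂'

end BiLipschitz

/-- The value of `c > 0` does not matter when truncating the metric below
(`d'_c = min (d, c)`) or above (`d''_c(x,y) = max (c, d(x,y))` for `x ≠ y`):
the corresponding global dimensions agree with the `c = 1` case, i.e. with
`m-dim_S̄ X` and `M-dim_S̄ X` respectively. -/
theorem gdim_truncated_metric_indep_of_c (X : Type*) (m : MetricSpace X)
    (Sb : Set (ℝ≥0 → ℝ≥0)) (hSb : IsGlobalControlSemigroup Sb)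
    (c : ℝ) (hc : 0 < c)
    (m'c m'1 m''c m''1 : MetricSpace X)
    (h'c : ∀ x y : X, MDist m'c x y = min (MDist m x y) c)
    (h'1 : ∀ x y : X, MDist m'1 x y = min (MDist m x y) 1)
    (h''c : ∀ x y : X, x ≠ y → MDist m''c x y = max c (MDist m x y))
    (h''1 : ∀ x y : X, x ≠ y → MDist m''1 x y = max 1 (MDist m x y)) :
    @GDim Sb X m'c = @GDim Sb X m'1 ∧ @GDim Sb X m''c = @GDim Sb X m''1 := by
  have hd (x y : X) : 0 ≤ MDist m x y := @dist_nonneg X m.toPseudoMetricSpace x y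
  constructor <;> apply gdim_eq_of_mdist_le_mul hSb
  · intro x y _
    rw [h'c, h'1]
    exact min_le_max_div_mul_min (hd x y) one_pos
  · intro x y _
    rw [h'c, h'1]
    exact min_le_max_div_mul_min (hd x y) hc
  · intro x y hxy
    rw [h''c x y hxy, h''1 x y hxy]
    exact max_le_max_div_mul_max (hd x y) one_pos
  · intro x y hxy
    rw [h''c x y hxy, h''1 x y hxy]
    exact max_le_max_div_mul_max (hd x y) hc
end
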